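/- Let N ≥ 2 and 0 < p₀ < ∞. For any function φ ∈ C^∞(ℝ^N) ∩ L^{p₀}(ℝ^N), the inequality ‖φ‖_{L^{N/(N-1)}} ≤ (1/N) · Σ_{|α|=1} ‖∂^α φ‖_{L¹} holds. -/

import Mathlib

open MeasureTheory ENNReal NNReal Finset Function

section Aux

variable {ι : Type*} [Fintype ι] [DecidableEq ι] {A : ι → Type*}
  [∀ i, MeasurableSpace (A i)] (μ : ∀ i, Measure (A i)) [∀ i, SigmaFinite (μ i)]

/-- Key induction for the Loomis–Whitney / Gagliardo inequality with a family of functions. -/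
theorem lw_key (hcard : 2 ≤ Fintype.card ι) {F : ι → (∀ i, A i) → ℝ≥0∞}
    (hF : ∀ i, Measurable (F i)) (s : Finset ι) :
    ∫⋯∫⁻_s, (fun x => ∏ i, ((∫⋯∫⁻_{i}, F i ∂μ) x) ^ ((Fintype.card ι - 1 : ℝ)⁻¹)) ∂μ ≤
      fun x => ∏ i, ((∫⋯∫⁻_(s.erase i), (∫⋯∫⁻_{i}, F i ∂μ) ∂μ) x) ^ ((Fintype.card ι - 1 : ℝ)⁻¹) := by
  classical
  set p : ℝ := (Fintype.card ι - 1 : ℝ)⁻¹ with hp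
  have hn1 : (1 : ℝ) ≤ (Fintype.card ι : ℝ) - 1 := by
    have : (2:ℝ) ≤ (Fintype.card ι : ℝ) := by exact_mod_cast hcard
    linarith
  have hp0 : 0 ≤ p := by positivity
  set f : ι → (∀ i, A i) → ℝ≥0∞ := fun i => ∫⋯∫⁻_{i}, F i ∂μ with hf
  have hfm : ∀ i, Measurable (f i) := fun i => (hF i).lmarginal μ
  have hfind : ∀ i (x : ∀ j, A j) (t : A i), f i (update x i t) = f i x := fun i x t =>
    lmarginal_update_of_mem μ (mem_singleton_self i) (F i) x t
  have hG : Measurable (fun x => ∏ i, (f i x) ^ p) :=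
    Finset.measurable_prod _ fun i _ => (hfm i).pow_const p
  induction s using Finset.induction with
  | empty =>
      intro x
      simp [lmarginal_empty]
  | @insert j s hj IH =>
      intro x
      rw [lmarginal_insert _ hG hj]
      have step1 : ∫⁻ t, (∫⋯∫⁻_s, (fun x => ∏ i, (f i x) ^ p) ∂μ) (update x j t) ∂μ j ≤
          ∫⁻ t, ∏ i, ((∫⋯∫⁻_(s.erase i), f i ∂μ) (update x j t)) ^ p ∂μ j :=
        lintegral_mono fun t => IH (update x j t)
      refine step1.trans ?_
      -- split off the j factor, which is constant in t
      have hjconst : ∀ t : A j,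
          (∫⋯∫⁻_(s.erase j), f j ∂μ) (update x j t) = (∫⋯∫⁻_s, f j ∂μ) x := by
        intro t
        rw [Finset.erase_eq_of_notMem hj, lmarginal_update_of_notMem (hfm j) hj]
        congr 1
        ext y
        simp only [Function.comp]
        exact hfind j y t
      have hsplit : ∀ t : A j, ∏ i, ((∫⋯∫⁻_(s.erase i), f i ∂μ) (update x j t)) ^ p =
          ((∫⋯∫⁻_s, f j ∂μ) x) ^ p *
            ∏ i ∈ univ.erase j, ((∫⋯∫⁻_(s.erase i), f i ∂μ) (update x j t)) ^ p := by
        intro t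
        rw [← Finset.mul_prod_erase univ _ (mem_univ j), hjconst t]
      simp_rw [hsplit]
      have hmeas : Measurable (fun t : A j => ∏ i ∈ univ.erase j,
          ((∫⋯∫⁻_(s.erase i), f i ∂μ) (update x j t)) ^ p) :=
        Finset.measurable_prod _ fun i _ =>
          ((((hfm i).lmarginal μ)).comp (measurable_update x)).pow_const p
      rw [lintegral_const_mul _ hmeas]
      -- Hölder in the j variable over the remaining card ι - 1 factors
      have hHolder : ∫⁻ t, ∏ i ∈ univ.erase j,
            ((∫⋯∫⁻_(s.erase i), f i ∂μ) (update x j t)) ^ p ∂μ j ≤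
          ∏ i ∈ univ.erase j,
            (∫⁻ t, (∫⋯∫⁻_(s.erase i), f i ∂μ) (update x j t) ∂μ j) ^ p := by
        refine ENNReal.lintegral_prod_norm_pow_le _ (fun i _ =>
          (((hfm i).lmarginal μ).comp (measurable_update x)).aemeasurable) ?_ (fun i _ => hp0)
        · rw [Finset.sum_const, card_erase_of_mem (mem_univ j), card_univ, nsmul_eq_mul, hp]
          rw [mul_inv_eq_one₀ (by linarith)]
          rw [Nat.cast_sub (by omega : 1 ≤ Fintype.card ι), Nat.cast_one]
      refine le_trans (mul_le_mul_right hHolder _) ?_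
      -- now rewrite each integral as an lmarginal over insert j (s.erase i)
      have hrw : ∀ i ∈ univ.erase j,
          (∫⁻ t, (∫⋯∫⁻_(s.erase i), f i ∂μ) (update x j t) ∂μ j) ^ p =
          ((∫⋯∫⁻_((insert j s).erase i), f i ∂μ) x) ^ p := by
        intro i hi
        have hij : j ≠ i := fun h => (mem_erase.mp hi).1 h.symm
        rw [Finset.erase_insert_of_ne hij,
          lmarginal_insert _ (hfm i) (fun h => hj (Finset.mem_of_mem_erase h))]
      rw [Finset.prod_congr rfl hrw]
      have hc : ((∫⋯∫⁻_s, f j ∂μ) x) ^ p =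
          ((∫⋯∫⁻_((insert j s).erase j), f j ∂μ) x) ^ p := by
        rw [Finset.erase_insert hj]
      rw [hc]
      exact le_of_eq (Finset.mul_prod_erase univ
        (fun i => ((∫⋯∫⁻_((insert j s).erase i), f i ∂μ) x) ^ p) (mem_univ j))

/-- Loomis–Whitney / Gagliardo inequality. -/
theorem lw_full (hcard : 2 ≤ Fintype.card ι) {F : ι → (∀ i, A i) → ℝ≥0∞}
    (hF : ∀ i, Measurable (F i)) (x₀ : ∀ i, A i) :
    ∫⁻ x, ∏ i, ((∫⋯∫⁻_{i}, F i ∂μ) x) ^ ((Fintype.card ι - 1 : ℝ)⁻¹) ∂Measure.pi μ ≤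
      ∏ i, (∫⁻ x, F i x ∂Measure.pi μ) ^ ((Fintype.card ι - 1 : ℝ)⁻¹) := by
  have hkey := lw_key μ hcard hF Finset.univ x₀
  rw [lmarginal_univ] at hkey
  refine le_trans hkey (le_of_eq ?_)
  refine Finset.prod_congr rfl fun i _ => ?_
  have hdisj : Disjoint (univ.erase i) ({i} : Finset ι) :=
    Finset.disjoint_singleton_right.mpr (Finset.notMem_erase i univ)
  have h1 : ∫⋯∫⁻_(univ.erase i), (∫⋯∫⁻_{i}, F i ∂μ) ∂μ
      = ∫⋯∫⁻_((univ.erase i) ∪ {i}), F i ∂μ :=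
    (lmarginal_union μ (F i) (hF i) hdisj).symm
  have h2 : (univ.erase i) ∪ ({i} : Finset ι) = univ := by
    rw [Finset.union_comm, ← Finset.insert_eq, Finset.insert_erase (mem_univ i)]
  rw [h1, h2, lmarginal_univ]

end Aux

theorem line_bound {g g' : ℝ → ℝ} {p₀ : ℝ} (hp₀ : 0 < p₀)
    (hd : ∀ t, HasDerivAt g (g' t) t) (hc : Continuous g')
    (hint : ∫⁻ t, (‖g' t‖₊ : ℝ≥0∞) ∂volume ≠ ∞)
    (hgp : ∫⁻ t, (‖g t‖₊ : ℝ≥0∞) ^ p₀ ∂volume ≠ ∞) (s : ℝ) :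
    (‖g s‖₊ : ℝ≥0∞) ≤ ∫⁻ t, (‖g' t‖₊ : ℝ≥0∞) ∂volume := by
  have hgint : Integrable g' volume := by
    exact ⟨hc.aestronglyMeasurable, hint.lt_top⟩
  have hftc : ∀ t, g t = g s + ∫ u in s..t, g' u := by
    intro t
    rw [intervalIntegral.integral_eq_sub_of_hasDerivAt (fun u _ => hd u)
      (hc.intervalIntegrable s t)]
    ring
  have hT : Filter.Tendsto g Filter.atTop (nhds (g s + ∫ u in Set.Ioi s, g' u)) := by
    have h1 := MeasureTheory.intervalIntegral_tendsto_integral_Ioi s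
      hgint.integrableOn Filter.tendsto_id
    exact (h1.const_add (g s)).congr fun t => (hftc t).symm
  set L := g s + ∫ u in Set.Ioi s, g' u with hLdef
  have hL : L = 0 := by
    by_contra hL
    have habs : 0 < |L| := abs_pos.mpr hL
    have hev : ∀ᶠ t in Filter.atTop, |L| / 2 ≤ |g t| := by
      have h2 : ∀ᶠ t in Filter.atTop, |g t - L| < |L| / 2 := by
        have h3 := Metric.tendsto_nhds.mp hT (|L| / 2) (by positivity)
        simpa [Real.dist_eq] using h3
      filter_upwards [h2] with t ht
      have h4 : |L| - |g t| ≤ |g t - L| := by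
        have := abs_sub_abs_le_abs_sub L (g t)
        rwa [abs_sub_comm] at this
      linarith
    obtain ⟨M, hM⟩ := Filter.eventually_atTop.mp hev
    apply hgp
    refine top_le_iff.mp ?_
    have hc0 : (0:ℝ) < (|L| / 2) ^ p₀ := by positivity
    calc (⊤ : ℝ≥0∞) = ENNReal.ofReal ((|L| / 2) ^ p₀) * volume (Set.Ici M) := by
          rw [Real.volume_Ici, ENNReal.mul_top (by simpa using hc0)]
      _ = ∫⁻ _ in Set.Ici M, ENNReal.ofReal ((|L| / 2) ^ p₀) ∂volume := by
          rw [setLIntegral_const]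
      _ ≤ ∫⁻ t in Set.Ici M, (‖g t‖₊ : ℝ≥0∞) ^ p₀ ∂volume := by
          have hgd : Differentiable ℝ g := fun t => (hd t).differentiableAt
          have hgc : Continuous g := hgd.continuous
          refine setLIntegral_mono
            (hgc.measurable.nnnorm.coe_nnreal_ennreal.pow_const p₀) ?_
          intro t ht
          have h5 : (0:ℝ) < |g t| := lt_of_lt_of_le (by positivity) (hM t ht)
          rw [show (‖g t‖₊ : ℝ≥0∞) = ENNReal.ofReal |g t| from Real.enorm_eq_ofReal_abs _, ENNReal.ofReal_rpow_of_pos h5]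
          exact ENNReal.ofReal_le_ofReal
            (Real.rpow_le_rpow (by positivity) (hM t ht) hp₀.le)
      _ ≤ ∫⁻ t, (‖g t‖₊ : ℝ≥0∞) ^ p₀ ∂volume := setLIntegral_le_lintegral _ _
  have hgs : g s = -∫ u in Set.Ioi s, g' u := by
    have := hLdef
    rw [hL] at this
    linarith [this]
  calc (‖g s‖₊ : ℝ≥0∞) = ‖∫ u in Set.Ioi s, g' u‖₊ := by rw [hgs, nnnorm_neg]
    _ ≤ ∫⁻ u in Set.Ioi s, ‖g' u‖₊ ∂volume := enorm_integral_le_lintegral_enorm _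
    _ ≤ ∫⁻ t, (‖g' t‖₊ : ℝ≥0∞) ∂volume := setLIntegral_le_lintegral _ _


theorem insertNth_snd_eq_update {n : ℕ} (i : Fin (n + 1)) (x : Fin (n + 1) → ℝ) (t : ℝ) :
    i.insertNth t (fun j => x (i.succAbove j)) = update x i t := by
  funext j
  refine Fin.succAboveCases i ?_ ?_ j
  · rw [Fin.insertNth_apply_same, update_self]
  · intro k
    rw [Fin.insertNth_apply_succAbove, update_of_ne (Fin.succAbove_ne i k)]

theorem ae_slice_lt_top {n : ℕ} (i : Fin (n + 1)) {h : (Fin (n + 1) → ℝ) → ℝ≥0∞}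
    (hh : Measurable h)
    (hint : ∫⁻ x, h x ∂(volume : Measure (Fin (n + 1) → ℝ)) ≠ ∞) :
    ∀ᵐ x ∂(volume : Measure (Fin (n + 1) → ℝ)),
      ∫⁻ t, h (update x i t) ∂volume < ∞ := by
  have mp := MeasureTheory.measurePreserving_piFinSuccAbove
    (fun _ : Fin (n + 1) => (volume : Measure ℝ)) i
  set e := MeasurableEquiv.piFinSuccAbove (fun _ : Fin (n + 1) => ℝ) i with he
  set ν := Measure.pi (fun _ : Fin n => (volume : Measure ℝ)) with hν
  have hesymm : ∀ (t : ℝ) (y : Fin n → ℝ), e.symm (t, y) = i.insertNth t y := by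
    intro t y
    rw [he, MeasurableEquiv.piFinSuccAbove_symm_apply]
    rfl
  have hmeas2 : Measurable (fun z : ℝ × (Fin n → ℝ) => h (e.symm z)) :=
    hh.comp e.symm.measurable
  have hint2 : ∫⁻ z, h (e.symm z) ∂((volume : Measure ℝ).prod ν) ≠ ∞ := by
    rw [(MeasurePreserving.symm e mp).lintegral_comp hh]
    rwa [volume_pi] at hint
  rw [lintegral_prod_symm _ hmeas2.aemeasurable] at hint2
  have hae : ∀ᵐ y ∂ν, ∫⁻ t, h (e.symm (t, y)) ∂volume < ∞ := by
    refine ae_lt_top ?_ hint2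
    exact Measurable.lintegral_prod_left (f := fun t y => h (e.symm (t, y))) hmeas2
  have hae2 : ∀ᵐ z ∂((volume : Measure ℝ).prod ν),
      ∫⁻ t, h (e.symm (t, z.2)) ∂volume < ∞ :=
    (MeasureTheory.Measure.quasiMeasurePreserving_snd).ae hae
  have hae3 : ∀ᵐ x ∂(Measure.pi (fun _ : Fin (n+1) => (volume : Measure ℝ))),
      ∫⁻ t, h (e.symm (t, (e x).2)) ∂volume < ∞ :=
    mp.quasiMeasurePreserving.ae hae2
  rw [volume_pi]
  filter_upwards [hae3] with x hx
  have hx2 : ∀ t, e.symm (t, (e x).2) = update x i t := by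
    intro t
    rw [hesymm]
    have : (e x).2 = fun j => x (i.succAbove j) := by
      rw [he, MeasurableEquiv.piFinSuccAbove_apply]
      rfl
    rw [this, insertNth_snd_eq_update]
  simpa only [hx2] using hx


/-- First-order partial derivative in direction `i`. -/
noncomputable def pd {N : ℕ} (i : Fin N) (φ : EuclideanSpace ℝ (Fin N) → ℝ) :
    EuclideanSpace ℝ (Fin N) → ℝ :=
  fun x => fderiv ℝ φ x (EuclideanSpace.single i 1)


theorem stmt0 {N : ℕ} (hN : 2 ≤ N) (p₀ : ℝ) (hp₀ : 0 < p₀)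
    (φ : EuclideanSpace ℝ (Fin N) → ℝ) (hφ : ContDiff ℝ (⊤ : ℕ∞) φ)
    (hmem : MemLp φ (ENNReal.ofReal p₀) volume) :
    eLpNorm φ (ENNReal.ofReal ((N : ℝ) / ((N : ℝ) - 1))) volume ≤
      (1 / (N : ℝ≥0∞)) * ∑ i : Fin N, eLpNorm (pd i φ) 1 volume := by
  classical
  -- transfer everything to the pi type `Fin N → ℝ`
  set E := PiLp.continuousLinearEquiv 2 ℝ (fun _ : Fin N => ℝ) with hE
  set ψ : (Fin N → ℝ) → ℝ := fun y => φ (E.symm y) with hψdef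
  have hψ : ContDiff ℝ (⊤ : ℕ∞) ψ := hφ.comp (E.symm.contDiff)
  set D : Fin N → (Fin N → ℝ) → ℝ := fun i y => fderiv ℝ ψ y (Pi.single i 1) with hD
  have hDeq : ∀ i y, D i y = pd i φ (E.symm y) := by
    intro i y
    have h1 : fderiv ℝ ψ y = (fderiv ℝ φ (E.symm y)).comp (E.symm : (Fin N → ℝ) →L[ℝ] _) := by
      exact ContinuousLinearEquiv.comp_right_fderiv (iso := E.symm) (f := φ) (x := y)
    show fderiv ℝ ψ y (Pi.single i 1) = pd i φ (E.symm y)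
    rw [h1]
    rfl
  -- continuity facts
  have hψc : Continuous ψ := hψ.continuous
  have hfd : Continuous (fderiv ℝ ψ) := hψ.continuous_fderiv (by simp)
  have hDc : ∀ i, Continuous (D i) := fun i =>
    (ContinuousLinearMap.apply ℝ ℝ ((Pi.single i 1 : Fin N → ℝ))).continuous.comp hfd
  -- transfer of lintegrals
  have Tlin : ∀ (h : EuclideanSpace ℝ (Fin N) → ℝ≥0∞), Measurable h →
      ∫⁻ x, h x ∂(volume : Measure (EuclideanSpace ℝ (Fin N)))
        = ∫⁻ y, h (E.symm y) ∂(volume : Measure (Fin N → ℝ)) := by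
    intro h hh
    exact ((MeasurePreserving.symm _
      (EuclideanSpace.volume_preserving_symm_measurableEquiv_toLp (Fin N))).lintegral_comp hh).symm
  -- the L¹ norms of the partial derivatives, transferred
  have hpdc : ∀ i, Continuous (pd i φ) := by
    intro i
    have hfdφ : Continuous (fderiv ℝ φ) := hφ.continuous_fderiv (by simp)
    exact (ContinuousLinearMap.apply ℝ ℝ
      (EuclideanSpace.single i (1:ℝ))).continuous.comp hfdφ
  set A : Fin N → ℝ≥0∞ := fun i => eLpNorm (pd i φ) 1 volume with hA
  have hAeq : ∀ i, A i = ∫⁻ y, (‖D i y‖₊ : ℝ≥0∞) ∂(volume : Measure (Fin N → ℝ)) := by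
    intro i
    show eLpNorm (pd i φ) 1 volume = _
    rw [eLpNorm_one_eq_lintegral_enorm,
      Tlin _ ((hpdc i).measurable.enorm)]
    refine lintegral_congr fun y => ?_
    rw [hDeq i y]
    rfl
  by_cases hfin : ∀ i, A i ≠ ∞
  case neg =>
    push_neg at hfin
    obtain ⟨i, hi⟩ := hfin
    have hsum : ∑ i : Fin N, eLpNorm (pd i φ) 1 volume = ∞ :=
      ENNReal.sum_eq_top.mpr ⟨i, mem_univ i, hi⟩
    rw [hsum, ENNReal.mul_top]
    · exact le_top
    · simp [ENNReal.div_eq_zero_iff]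
  case pos =>
  -- exponents
  have hN1 : (1 : ℝ) ≤ (N : ℝ) - 1 := by
    have : (2:ℝ) ≤ (N:ℝ) := by exact_mod_cast hN
    linarith
  have hNpos : (0:ℝ) < N := by linarith
  set p : ℝ := ((N : ℝ) - 1)⁻¹ with hpdef
  have hp0 : 0 ≤ p := by positivity
  set q₀ : ℝ := (N : ℝ) / ((N : ℝ) - 1) with hq₀def
  have hq₀pos : 0 < q₀ := by positivity
  have hqE0 : ENNReal.ofReal q₀ ≠ 0 := (ENNReal.ofReal_pos.mpr hq₀pos).ne'
  have hqEtop : ENNReal.ofReal q₀ ≠ ∞ := ENNReal.ofReal_ne_top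
  -- Memℒp transfer
  have hmem2 : ∫⁻ y, (‖ψ y‖₊ : ℝ≥0∞) ^ p₀ ∂(volume : Measure (Fin N → ℝ)) ≠ ∞ := by
    have h1 := hmem.2
    rw [eLpNorm_lt_top_iff_lintegral_rpow_enorm_lt_top
      (by simp [hp₀]) ENNReal.ofReal_ne_top] at h1
    rw [ENNReal.toReal_ofReal hp₀.le] at h1
    rw [Tlin _ (hφ.continuous.measurable.enorm.pow_const p₀)] at h1
    exact h1.ne
  -- need `N = m + 1` for the slice lemma
  obtain ⟨m, rfl⟩ : ∃ m, N = m + 1 := ⟨N - 1, by omega⟩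
  -- a.e. slice integrability of |ψ|^p₀
  have hslice : ∀ i : Fin (m+1), ∀ᵐ x ∂(volume : Measure (Fin (m+1) → ℝ)),
      ∫⁻ t, (‖ψ (update x i t)‖₊ : ℝ≥0∞) ^ p₀ ∂volume < ∞ := by
    intro i
    exact ae_slice_lt_top i
      (hψc.measurable.nnnorm.coe_nnreal_ennreal.pow_const p₀) hmem2
  -- Step B : a.e. pointwise bound
  have stepB : ∀ i : Fin (m+1), ∀ᵐ x ∂(volume : Measure (Fin (m+1) → ℝ)),
      (‖ψ x‖₊ : ℝ≥0∞) ≤ ∫⁻ t, (‖D i (update x i t)‖₊ : ℝ≥0∞) ∂volume := by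
    intro i
    filter_upwards [hslice i] with x hx
    by_cases hinf : ∫⁻ t, (‖D i (update x i t)‖₊ : ℝ≥0∞) ∂volume = ∞
    · rw [hinf]; exact le_top
    · have hd : ∀ t, HasDerivAt (fun t => ψ (update x i t)) (D i (update x i t)) t := by
        intro t
        have h1 := hasDerivAt_update x i t
        have h2 := (hψ.differentiable (by simp) (update x i t)).hasFDerivAt
        exact h2.comp_hasDerivAt t h1
      have hc : Continuous fun t => D i (update x i t) :=
        (hDc i).comp (continuous_const.update i continuous_id)
      have := line_bound hp₀ hd hc hinf hx.ne (x i)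
      simpa [Function.update_eq_self] using this
  have hae : ∀ᵐ x ∂(volume : Measure (Fin (m+1) → ℝ)), ∀ i,
      (‖ψ x‖₊ : ℝ≥0∞) ≤ ∫⁻ t, (‖D i (update x i t)‖₊ : ℝ≥0∞) ∂volume :=
    (MeasureTheory.ae_all_iff).mpr stepB
  -- the family for Loomis–Whitney
  set F : Fin (m+1) → (Fin (m+1) → ℝ) → ℝ≥0∞ := fun i y => (‖D i y‖₊ : ℝ≥0∞) with hF
  have hFm : ∀ i, Measurable (F i) := fun i =>
    (hDc i).measurable.nnnorm.coe_nnreal_ennreal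
  have hcard : 2 ≤ Fintype.card (Fin (m+1)) := by simpa using hN
  have hcardR : (Fintype.card (Fin (m+1)) : ℝ) - 1 = (↑(m+1) : ℝ) - 1 := by
    simp
  -- Main chain of inequalities
  have I1 : ∫⁻ y, (‖ψ y‖₊ : ℝ≥0∞) ^ q₀ ∂(volume : Measure (Fin (m+1) → ℝ))
      ≤ ∏ i, (∫⁻ y, F i y ∂(volume : Measure (Fin (m+1) → ℝ))) ^ p := by
    have hstep1 : ∫⁻ y, (‖ψ y‖₊ : ℝ≥0∞) ^ q₀ ∂(volume : Measure (Fin (m+1) → ℝ))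
        = ∫⁻ y, ∏ _i : Fin (m+1), (‖ψ y‖₊ : ℝ≥0∞) ^ p ∂(volume : Measure (Fin (m+1) → ℝ)) := by
      refine lintegral_congr fun y => ?_
      rw [Finset.prod_const, card_univ, Fintype.card_fin, ← ENNReal.rpow_natCast _ (m+1),
        ← ENNReal.rpow_mul]
      congr 1
      rw [hq₀def, hpdef, div_eq_mul_inv, mul_comm]
    rw [hstep1]
    have hstep2 : ∫⁻ y, ∏ _i : Fin (m+1), (‖ψ y‖₊ : ℝ≥0∞) ^ p
          ∂(volume : Measure (Fin (m+1) → ℝ))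
        ≤ ∫⁻ y, ∏ i, ((∫⋯∫⁻_{i}, F i ∂(fun _ => (volume : Measure ℝ))) y) ^ p
          ∂(volume : Measure (Fin (m+1) → ℝ)) := by
      refine lintegral_mono_ae ?_
      filter_upwards [hae] with y hy
      refine Finset.prod_le_prod' fun i _ => ENNReal.rpow_le_rpow ?_ hp0
      rw [lmarginal_singleton]
      exact hy i
    refine hstep2.trans ?_
    have hLW := lw_full (fun _ : Fin (m+1) => (volume : Measure ℝ)) hcard hFm
      (fun _ => (0:ℝ))
    rw [← volume_pi] at hLW
    have hcast : ((Fintype.card (Fin (m+1)) : ℝ) - 1)⁻¹ = p := by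
      rw [hpdef, hcardR]
    rw [hcast] at hLW
    exact hLW
  -- put everything together
  have hLHS : eLpNorm φ (ENNReal.ofReal q₀) volume
      = (∫⁻ y, (‖ψ y‖₊ : ℝ≥0∞) ^ q₀ ∂(volume : Measure (Fin (m+1) → ℝ))) ^ (1 / q₀) := by
    rw [eLpNorm_eq_lintegral_rpow_enorm_toReal hqE0 hqEtop, ENNReal.toReal_ofReal hq₀pos.le,
      Tlin _ (hφ.continuous.measurable.enorm.pow_const q₀)]
    rfl
  rw [hLHS]
  have I2 : (∫⁻ y, (‖ψ y‖₊ : ℝ≥0∞) ^ q₀ ∂(volume : Measure (Fin (m+1) → ℝ))) ^ (1 / q₀)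
      ≤ ∏ i, (A i) ^ ((1:ℝ) / (m+1)) := by
    refine le_trans (ENNReal.rpow_le_rpow I1 (by positivity)) (le_of_eq ?_)
    rw [← ENNReal.prod_rpow_of_nonneg (by positivity)]
    refine Finset.prod_congr rfl fun i _ => ?_
    rw [← ENNReal.rpow_mul, hAeq i]
    congr 1
    rw [hpdef, hq₀def]
    have hne : ((m+1 : ℕ):ℝ) - 1 ≠ 0 := by
      push_cast at hN1 ⊢
      linarith
    have hne2 : ((m+1 : ℕ):ℝ) ≠ 0 := by positivity
    have hm1 : 1 ≤ m := by omega
    have hm : (0:ℝ) < (m:ℝ) := by exact_mod_cast Nat.pos_of_ne_zero (by omega)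
    push_cast at hne hne2 ⊢
    field_simp
  refine I2.trans ?_
  -- AM–GM
  set a : Fin (m+1) → ℝ≥0 := fun i => (A i).toNNReal with ha
  have hacoe : ∀ i, A i = (a i : ℝ≥0∞) := fun i => (ENNReal.coe_toNNReal (hfin i)).symm
  have hNnn : ((m+1 : ℕ) : ℝ≥0) ≠ 0 := by positivity
  have hsumw : ∑ _i : Fin (m+1), ((m+1 : ℕ) : ℝ≥0)⁻¹ = 1 := by
    rw [Finset.sum_const, card_univ, Fintype.card_fin, nsmul_eq_mul]
    exact mul_inv_cancel₀ (by exact_mod_cast hNnn)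
  have hAMGM := NNReal.geom_mean_le_arith_mean_weighted univ
    (fun _ => ((m+1 : ℕ) : ℝ≥0)⁻¹) a hsumw
  calc ∏ i, (A i) ^ ((1:ℝ) / (m+1))
      = ((∏ i, a i ^ ((((m+1 : ℕ) : ℝ≥0)⁻¹ : ℝ≥0) : ℝ) : ℝ≥0) : ℝ≥0∞) := by
        rw [ENNReal.coe_finset_prod]
        refine Finset.prod_congr rfl fun i _ => ?_
        rw [ENNReal.coe_rpow_of_nonneg _ (by positivity), ← hacoe i]
        congr 1
        push_cast
        rw [one_div]
    _ ≤ ((∑ i, ((m+1 : ℕ) : ℝ≥0)⁻¹ * a i : ℝ≥0) : ℝ≥0∞) := ENNReal.coe_le_coe.mpr hAMGM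
    _ = (1 / ((m+1 : ℕ) : ℝ≥0∞)) * ∑ i, A i := by
        rw [← Finset.mul_sum, ENNReal.coe_mul, ENNReal.coe_finset_sum]
        congr 1
        · rw [one_div, ENNReal.coe_inv (by exact_mod_cast hNnn)]
          rw [ENNReal.coe_natCast]
        · exact Finset.sum_congr rfl fun i _ => (hacoe i).symm
    _ = (1 / ((m+1 : ℕ) : ℝ≥0∞)) * ∑ i, eLpNorm (pd i φ) 1 volume := rfl
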